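/- arXiv:2009.11452 — 2 statements merged into one kernel-verified Lean document; each statement's English description precedes it below -/
import Mathlib

section
/- Let Z be a nonempty set and ρ : Z × Z → ℝ a semi-metric (symmetric, nonnegative, vanishing on the diagonal). Then ρ is of negative type if and only if for every λ > 0 the function (z,z') ↦ exp(−λ ρ(z,z')) is a positive definite kernel on Z, i.e., for every n ≥ 1, all z₁,…,zₙ ∈ Z and all real c₁,…,cₙ, ∑_{i=1}^n ∑_{j=1}^n c_i c_j exp(−λ ρ(z_i, z_j)) ≥ 0. -/
/-! If `ρ` is of negative type, the kernel `K z z' = ρ z z₀ + ρ z₀ z' - ρ z z' - ρ z₀ z₀` is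
positive semidefinite: its quadratic form at `d` is minus the negative-type sum for the points
`z₀, z₁, …` with weights `-∑ dᵢ, d₁, …`. By the Schur product theorem and the exponential series
`exp (λ K)` is positive semidefinite too, and `exp (-λ ρ)` is a positive multiple of it conjugated by
a positive diagonal matrix. Conversely, if `∑ aᵢ = 0` then `f λ = ∑ aᵢ aⱼ exp (-λ ρ zᵢ zⱼ)` vanishes
at `0` and is nonnegative for `λ > 0`, so `f' 0 = -∑ aᵢ aⱼ ρ zᵢ zⱼ ≥ 0`. -/

open Finset Matrix

namespace Matrix

variable {ι : Type*} [Fintype ι]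

theorem dotProduct_mulVec_eq_sum_sum {R : Type*} [CommSemiring R] (A : Matrix ι ι R)
    (c : ι → R) : c ⬝ᵥ A *ᵥ c = ∑ i, ∑ j, c i * c j * A i j := by
  simp only [dotProduct, mulVec, mul_sum]
  exact sum_congr rfl fun i _ => sum_congr rfl fun j _ => by ring

theorem posSemidef_iff_sum_sum_nonneg {A : Matrix ι ι ℝ} :
    A.PosSemidef ↔ A.IsHermitian ∧ ∀ c : ι → ℝ, 0 ≤ ∑ i, ∑ j, c i * c j * A i j := by
  simp [posSemidef_iff_dotProduct_mulVec, dotProduct_mulVec_eq_sum_sum]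

theorem PosSemidef.map_pow {A : Matrix ι ι ℝ} (hA : A.PosSemidef) (m : ℕ) :
    (A.map (· ^ m)).PosSemidef := by
  induction m with
  | zero =>
    convert posSemidef_vecMulVec_self_star (1 : ι → ℝ) using 1
    ext i j; simp [vecMulVec]
  | succ m ih =>
    have h : A.map (· ^ (m + 1)) = A.map (· ^ m) ⊙ A := by ext i j; simp [pow_succ]
    exact h ▸ ih.hadamard hA

theorem PosSemidef.map_exp {A : Matrix ι ι ℝ} (hA : A.PosSemidef) :
    (A.map Real.exp).PosSemidef := by
  refine posSemidef_iff_sum_sum_nonneg.2 ⟨hA.isHermitian.map _ fun _ => rfl, fun c => ?_⟩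
  have hexp : ∀ x : ℝ, HasSum (fun m : ℕ => x ^ m / m.factorial) (Real.exp x) := fun x => by
    rw [Real.exp_eq_exp_ℝ]; exact NormedSpace.expSeries_div_hasSum_exp x
  have hsum : HasSum (fun m : ℕ => (∑ i, ∑ j, c i * c j * A i j ^ m) / m.factorial)
      (∑ i, ∑ j, c i * c j * Real.exp (A i j)) := by
    simp only [sum_div, mul_div_assoc]
    exact hasSum_sum fun i _ => hasSum_sum fun j _ => (hexp (A i j)).mul_left _
  refine hsum.nonneg fun m => div_nonneg ?_ m.factorial.cast_nonneg
  exact (posSemidef_iff_sum_sum_nonneg.1 (hA.map_pow m)).2 c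

end Matrix

theorem HasDerivAt.nonneg_of_le_on_Ioi {f : ℝ → ℝ} {f' a : ℝ} (hf : HasDerivAt f f' a)
    (h : ∀ t, a < t → f a ≤ f t) : 0 ≤ f' := by
  refine ge_of_tendsto hf.tendsto_slope_zero_right ?_
  filter_upwards [self_mem_nhdsWithin] with t (ht : 0 < t)
  exact smul_nonneg (inv_nonneg.2 ht.le) (sub_nonneg.2 (h _ (lt_add_of_pos_right a ht)))

theorem sum_sum_mul_nonpos_of_exp {ι : Type*} [Fintype ι] (D : ι → ι → ℝ) {a : ι → ℝ}
    (ha : ∑ i, a i = 0) (h : ∀ l, 0 < l → 0 ≤ ∑ i, ∑ j, a i * a j * Real.exp (-l * D i j)) :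
    ∑ i, ∑ j, a i * a j * D i j ≤ 0 := by
  have hderiv : HasDerivAt (fun l => ∑ i, ∑ j, a i * a j * Real.exp (-l * D i j))
      (∑ i, ∑ j, a i * a j * -D i j) 0 := by
    refine HasDerivAt.fun_sum fun i _ => HasDerivAt.fun_sum fun j _ => ?_
    simpa using (((hasDerivAt_id 0).neg.mul_const (D i j)).exp).const_mul (a i * a j)
  have h0 : ∑ i, ∑ j, a i * a j * Real.exp (-0 * D i j) = 0 := by
    simp [← sum_mul_sum, ha]
  have := hderiv.nonneg_of_le_on_Ioi fun l hl => h0.symm ▸ h l hl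
  simpa using this

section NegativeType

variable {Z : Type*}

def IsNegativeType (ρ : Z → Z → ℝ) : Prop :=
  ∀ (n : ℕ) (z : Fin n → Z) (a : Fin n → ℝ),
    ∑ i, a i = 0 → ∑ i, ∑ j, a i * a j * ρ (z i) (z j) ≤ 0

theorem IsNegativeType.of_two_le {ρ : Z → Z → ℝ}
    (h : ∀ n, 2 ≤ n → ∀ (z : Fin n → Z) (a : Fin n → ℝ),
      ∑ i, a i = 0 → ∑ i, ∑ j, a i * a j * ρ (z i) (z j) ≤ 0) :
    IsNegativeType ρ := by
  intro n z a ha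
  rcases le_or_gt 2 n with hn | hn
  · exact h n hn z a ha
  interval_cases n
  · simp
  · simp_all

def centeredKernel (ρ : Z → Z → ℝ) (z₀ : Z) {n : ℕ} (z : Fin n → Z) : Matrix (Fin n) (Fin n) ℝ :=
  of fun i j => ρ (z i) z₀ + ρ z₀ (z j) - ρ (z i) (z j) - ρ z₀ z₀

theorem sum_sum_mul_centeredKernel (ρ : Z → Z → ℝ) (z₀ : Z) {n : ℕ} (z : Fin n → Z)
    (d : Fin n → ℝ) :
    ∑ i, ∑ j, d i * d j * centeredKernel ρ z₀ z i j =
      -∑ i, ∑ j, (Fin.cons (-∑ k, d k) d : Fin (n + 1) → ℝ) i *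
        (Fin.cons (-∑ k, d k) d : Fin (n + 1) → ℝ) j *
          ρ ((Fin.cons z₀ z : Fin (n + 1) → Z) i) ((Fin.cons z₀ z : Fin (n + 1) → Z) j) := by
  simp only [Fin.sum_univ_succ, Fin.cons_zero, Fin.cons_succ, centeredKernel, of_apply, mul_sub,
    mul_add, sum_add_distrib, sum_sub_distrib, neg_mul, mul_neg, sum_neg_distrib, mul_assoc,
    ← mul_sum]
  simp only [← sum_mul]
  ring

theorem IsNegativeType.centeredKernel_posSemidef {ρ : Z → Z → ℝ} (hρ : IsNegativeType ρ)
    (hsymm : ∀ z z', ρ z z' = ρ z' z) (z₀ : Z) {n : ℕ} (z : Fin n → Z) :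
    (centeredKernel ρ z₀ z).PosSemidef := by
  refine posSemidef_iff_sum_sum_nonneg.2 ⟨?_, fun d => ?_⟩
  · ext i j
    simp only [conjTranspose_apply, star_trivial, centeredKernel, of_apply]
    linarith [hsymm (z i) z₀, hsymm (z j) z₀, hsymm (z i) (z j)]
  · rw [sum_sum_mul_centeredKernel, neg_nonneg]
    exact hρ _ _ _ (by rw [Fin.sum_cons]; ring)

theorem IsNegativeType.exp_posSemidef {ρ : Z → Z → ℝ} (hρ : IsNegativeType ρ)
    (hsymm : ∀ z z', ρ z z' = ρ z' z) {l : ℝ} (hl : 0 ≤ l) {n : ℕ} (z : Fin n → Z) :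
    (of fun i j => Real.exp (-l * ρ (z i) (z j))).PosSemidef := by
  obtain _ | n := n
  · rw [Subsingleton.elim (of _) 0]
    exact .zero
  set z₀ := z 0
  set D : Matrix (Fin (n + 1)) (Fin (n + 1)) ℝ := diagonal fun i => Real.exp (-l * ρ (z i) z₀)
  have hK := ((hρ.centeredKernel_posSemidef hsymm z₀ z).smul hl).map_exp
  convert (hK.conjTranspose_mul_mul_same D).smul (Real.exp_nonneg (l * ρ z₀ z₀)) using 1
  ext i j
  simp only [D, of_apply, Matrix.smul_apply, diagonal_conjTranspose, diagonal_mul, mul_diagonal,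
    map_apply, centeredKernel, smul_eq_mul, star_trivial, ← Real.exp_add]
  congr 1
  rw [hsymm z₀ (z j)]
  ring

end NegativeType

theorem negtype_iff_exp_posdef_general {Z : Type*} (ρ : Z → Z → ℝ)
    (hsymm : ∀ z z', ρ z z' = ρ z' z) :
    (∀ (n : ℕ), 2 ≤ n → ∀ (z : Fin n → Z) (a : Fin n → ℝ),
      (∑ i, a i) = 0 → ∑ i, ∑ j, a i * a j * ρ (z i) (z j) ≤ 0) ↔
    (∀ l : ℝ, 0 < l → ∀ (n : ℕ), 1 ≤ n → ∀ (z : Fin n → Z) (c : Fin n → ℝ),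
      0 ≤ ∑ i, ∑ j, c i * c j * Real.exp (-l * ρ (z i) (z j))) := by
  constructor
  · intro hneg l hl n _ z
    have hpsd := (IsNegativeType.of_two_le hneg).exp_posSemidef hsymm hl.le z
    exact (posSemidef_iff_sum_sum_nonneg.1 hpsd).2
  · intro hpd n hn z a ha
    exact sum_sum_mul_nonpos_of_exp _ ha fun l hl => hpd l hl n (by omega) z a

/-- A semi-metric `ρ` is of negative type if and only if for every
`λ > 0` the kernel `(z,z') ↦ exp(−λ ρ(z,z'))` is positive definite. -/
theorem negtype_iff_exp_posdef {Z : Type*} [Nonempty Z] (ρ : Z → Z → ℝ)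
    (hsymm : ∀ z z', ρ z z' = ρ z' z)
    (hnonneg : ∀ z z', 0 ≤ ρ z z')
    (hdiag : ∀ z, ρ z z = 0) :
    (∀ (n : ℕ), 2 ≤ n → ∀ (z : Fin n → Z) (a : Fin n → ℝ),
      (∑ i, a i) = 0 → ∑ i, ∑ j, a i * a j * ρ (z i) (z j) ≤ 0) ↔
    (∀ l : ℝ, 0 < l → ∀ (n : ℕ), 1 ≤ n → ∀ (z : Fin n → Z) (c : Fin n → ℝ),
      0 ≤ ∑ i, ∑ j, c i * c j * Real.exp (-l * ρ (z i) (z j))) :=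
  negtype_iff_exp_posdef_general ρ hsymm
end

section
/- Let 0 < q ≤ p ≤ 2. On the set of sequences x : ℕ → ℝ with ∑_t |x(t)|^p < ∞, the function ρ(x,y) = ‖x − y‖_p^q, where ‖x − y‖_p = (∑_t |x(t) − y(t)|^p)^{1/p}, is a semi-metric of negative type: for every n ≥ 2, all x₁,…,xₙ and all real α₁,…,αₙ with ∑_i α_i = 0, one has ∑_{i=1}^n ∑_{j=1}^n α_i α_j ‖x_i − x_j‖_p^q ≤ 0. -/
/-!
If `M` is symmetric, vanishes on the diagonal and is of negative type, then `exp (-M)` is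
positive semidefinite (Schoenberg): the kernel `M i i₀ + M j i₀ - M i j` is positive semidefinite,
entrywise exponentials preserve this by the Schur product theorem, and `exp (-M)` is its
exponential conjugated by a positive diagonal matrix. Applied to `l • M` for all `l > 0`, together
with `u ^ θ = c_θ⁻¹ ∫₀^∞ (1 - exp (-u l)) l ^ (-1 - θ) dl` for `0 < θ < 1`, this shows that `M ^ θ`
is again of negative type. Starting from `(s i - s j) ^ 2` this gives `|s i - s j| ^ p` for
`p ≤ 2`, summing over coordinates gives `‖x i - x j‖_p ^ p`, and the power `q / p ≤ 1` finishes.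
-/

open Finset Real MeasureTheory Set Matrix

theorem integrableOn_one_sub_exp_mul_rpow {θ u : ℝ} (hθ : 0 < θ) (hθ1 : θ < 1) (hu : 0 ≤ u) :
    IntegrableOn (fun l => (1 - exp (-(u * l))) * l ^ (-1 - θ)) (Ioi 0) := by
  have hmeas : AEStronglyMeasurable (fun l : ℝ => (1 - exp (-(u * l))) * l ^ (-1 - θ)) :=
    (by fun_prop : Measurable fun l : ℝ => (1 - exp (-(u * l))) * l ^ (-1 - θ)).aestronglyMeasurable
  have hbound {l : ℝ} (hl : 0 < l) :
      ‖(1 - exp (-(u * l))) * l ^ (-1 - θ)‖ ≤ min (u * l) 1 * l ^ (-1 - θ) := by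
    have hul : 0 ≤ u * l := mul_nonneg hu hl.le
    rw [norm_of_nonneg (by have := exp_le_one_iff.2 (neg_nonpos.2 hul); positivity)]
    gcongr
    exact le_min (by linarith [add_one_le_exp (-(u * l))]) (by linarith [exp_pos (-(u * l))])
  rw [← Ioc_union_Ioi_eq_Ioi zero_le_one]
  refine IntegrableOn.union ?_ ?_
  · have hint : IntegrableOn (fun l : ℝ => u * l ^ (-θ)) (Ioc 0 1) :=
      ((intervalIntegral.intervalIntegrable_rpow' (r := -θ) (by linarith)).1.const_mul u :)
    refine hint.mono' hmeas.restrict <| (ae_restrict_iff' measurableSet_Ioc).2 <|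
      .of_forall fun l hl => (hbound hl.1).trans ?_
    calc min (u * l) 1 * l ^ (-1 - θ) ≤ u * l * l ^ (-1 - θ) :=
          mul_le_mul_of_nonneg_right (min_le_left _ _) (rpow_nonneg hl.1.le _)
      _ = u * l ^ (-θ) := by
          rw [mul_assoc, mul_comm l, ← rpow_add_one hl.1.ne']; ring_nf
  · refine (integrableOn_Ioi_rpow_of_lt (a := -1 - θ) (by linarith) one_pos).mono'
      hmeas.restrict <| (ae_restrict_iff' measurableSet_Ioi).2 <| .of_forall fun l hl => ?_
    exact (hbound (one_pos.trans hl)).trans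
      (mul_le_of_le_one_left (rpow_nonneg (by linarith [hl.out]) _) (min_le_right _ _))

theorem integral_one_sub_exp_mul_rpow {θ u : ℝ} (hθ : 0 < θ) (hu : 0 ≤ u) :
    ∫ l in Ioi 0, (1 - exp (-(u * l))) * l ^ (-1 - θ) =
      u ^ θ * ∫ l in Ioi 0, (1 - exp (-l)) * l ^ (-1 - θ) := by
  rcases hu.eq_or_lt with rfl | hu
  · simp [zero_rpow hθ.ne']
  have hscale : ∀ l ∈ Ioi (0 : ℝ), (1 - exp (-(u * l))) * l ^ (-1 - θ) =
      u ^ (1 + θ) * ((1 - exp (-(u * l))) * (u * l) ^ (-1 - θ)) := fun l hl => by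
    rw [mul_rpow hu.le (le_of_lt hl), mul_left_comm, ← mul_assoc (u ^ (1 + θ)),
      ← rpow_add hu]
    simp
  rw [setIntegral_congr_fun measurableSet_Ioi hscale, integral_const_mul,
    integral_comp_mul_left_Ioi (fun l => (1 - exp (-l)) * l ^ (-1 - θ)) 0 hu, mul_zero,
    smul_eq_mul, ← mul_assoc, ← rpow_neg_one, ← rpow_add hu]
  ring_nf

theorem integral_one_sub_exp_rpow_pos {θ : ℝ} (hθ : 0 < θ) (hθ1 : θ < 1) :
    0 < ∫ l in Ioi 0, (1 - exp (-l)) * l ^ (-1 - θ) := by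
  have hint := integrableOn_one_sub_exp_mul_rpow hθ hθ1 zero_le_one
  simp only [one_mul] at hint
  have hpos : ∀ l ∈ Ioi (0 : ℝ), 0 < (1 - exp (-l)) * l ^ (-1 - θ) := fun l (hl : 0 < l) =>
    mul_pos (sub_pos.2 (exp_lt_one_iff.2 (neg_lt_zero.2 hl))) (rpow_pos_of_pos hl _)
  rw [setIntegral_pos_iff_support_of_nonneg_ae
    (ae_restrict_of_forall_mem measurableSet_Ioi fun l hl => (hpos l hl).le) hint,
    inter_eq_right.2 fun l hl => Function.mem_support.2 (hpos l hl).ne', volume_Ioi]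
  exact ENNReal.zero_lt_top

theorem summable_abs_sub_rpow {α : Type*} {p : ℝ} (hp : 0 < p) {f g : α → ℝ}
    (hf : Summable fun t => |f t| ^ p) (hg : Summable fun t => |g t| ^ p) :
    Summable fun t => |f t - g t| ^ p := by
  have hp' : 0 < (ENNReal.ofReal p).toReal := by rwa [ENNReal.toReal_ofReal hp.le]
  have hmem {h : α → ℝ} : Memℓp h (ENNReal.ofReal p) ↔ Summable fun t => |h t| ^ p := by
    rw [memℓp_gen_iff hp', ENNReal.toReal_ofReal hp.le]; rfl
  exact hmem.1 ((hmem.2 hf).sub (hmem.2 hg))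

namespace Matrix

variable {ι : Type*} [Fintype ι]

def IsNegType (M : Matrix ι ι ℝ) : Prop :=
  ∀ a : ι → ℝ, ∑ i, a i = 0 → ∑ i, ∑ j, a i * a j * M i j ≤ 0

theorem posSemidef_iff_isSymm_and_sum_sum_nonneg {M : Matrix ι ι ℝ} :
    M.PosSemidef ↔ M.IsSymm ∧ ∀ a : ι → ℝ, 0 ≤ ∑ i, ∑ j, a i * a j * M i j := by
  have (a : ι → ℝ) : a ⬝ᵥ M *ᵥ a = ∑ i, ∑ j, a i * a j * M i j := by
    simp only [dotProduct, mulVec, mul_sum]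
    exact sum_congr rfl fun i _ => sum_congr rfl fun j _ => by ring
  simp [posSemidef_iff_dotProduct_mulVec, this]

theorem PosSemidef.sum_sum_nonneg {M : Matrix ι ι ℝ} (hM : M.PosSemidef) (a : ι → ℝ) :
    0 ≤ ∑ i, ∑ j, a i * a j * M i j :=
  (posSemidef_iff_isSymm_and_sum_sum_nonneg.1 hM).2 a

theorem PosSemidef.map_pow_s9 {M : Matrix ι ι ℝ} (hM : M.PosSemidef) (m : ℕ) :
    (M.map (· ^ m)).PosSemidef := by
  induction m with
  | zero =>
    convert posSemidef_vecMulVec_self_star (fun _ : ι => (1 : ℝ)) using 1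
    ext; simp [vecMulVec]
  | succ m ih =>
    have : M.map (· ^ (m + 1)) = M ⊙ M.map (· ^ m) := by ext; simp [pow_succ']
    exact this ▸ hM.hadamard ih

theorem PosSemidef.map_exp_s9 {M : Matrix ι ι ℝ} (hM : M.PosSemidef) :
    (M.map exp).PosSemidef := by
  refine posSemidef_iff_isSymm_and_sum_sum_nonneg.2
    ⟨(posSemidef_iff_isSymm_and_sum_sum_nonneg.1 hM).1.map _, fun a => ?_⟩
  have hexp (u : ℝ) : HasSum (fun m : ℕ => u ^ m / m.factorial) (exp u) := by
    simpa [Real.exp_eq_exp_ℝ] using NormedSpace.expSeries_div_hasSum_exp u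
  refine HasSum.nonneg (fun m => ?_) <|
    hasSum_sum fun i _ => hasSum_sum fun j _ => (hexp (M i j)).mul_left (a i * a j)
  have := div_nonneg ((hM.map_pow_s9 m).sum_sum_nonneg a) (Nat.cast_nonneg m.factorial)
  simpa only [map_apply, sum_div, mul_div_assoc] using this

theorem IsNegType.smul {M : Matrix ι ι ℝ} (hM : M.IsNegType) {c : ℝ} (hc : 0 ≤ c) :
    (c • M).IsNegType := fun a ha => by
  have := mul_nonpos_of_nonneg_of_nonpos hc (hM a ha)
  simpa only [smul_apply, smul_eq_mul, mul_sum, mul_left_comm c] using this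

theorem IsNegType.posSemidef_add_sub {M : Matrix ι ι ℝ} (hM : M.IsNegType)
    (hsymm : M.IsSymm) {i₀ : ι} (hi₀ : M i₀ i₀ = 0) :
    (of fun i j => M i i₀ + M j i₀ - M i j).PosSemidef := by
  classical
  have hM' (i j : ι) : M j i = M i j := hsymm.apply i j
  refine posSemidef_iff_isSymm_and_sum_sum_nonneg.2 ⟨?_, fun b => ?_⟩
  · ext i j
    simp only [hM', transpose_apply, of_apply, sub_left_inj]
    ring
  set s := ∑ i, b i
  let c := b - Pi.single i₀ s
  have hc : ∑ i, c i = 0 := by simp [c, sum_sub_distrib, s]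
  have key : ∑ i, ∑ j, b i * b j * (of fun i j => M i i₀ + M j i₀ - M i j) i j =
      -∑ i, ∑ j, c i * c j * M i j := by
    simp only [c, of_apply, Pi.sub_apply, Pi.single_apply, sub_mul, mul_sub, mul_add,
      sum_sub_distrib, sum_add_distrib, ite_mul, mul_ite, mul_zero, zero_mul, sum_ite_eq',
      Finset.mem_univ, if_true, hi₀]
    rw [sum_comm (f := fun x y => if x = i₀ then s * b y * M x y else 0)]
    simp only [sum_ite_eq', Finset.mem_univ, if_true, mul_assoc, ← mul_sum, ← sum_mul, hM' i₀]
    ring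
  linarith [hM c hc]

theorem IsNegType.posSemidef_map_exp_neg {M : Matrix ι ι ℝ} (hM : M.IsNegType)
    (hsymm : M.IsSymm) (hdiag : ∀ i, M i i = 0) : (M.map fun u => exp (-u)).PosSemidef := by
  cases isEmpty_or_nonempty ι
  · exact Subsingleton.elim (0 : Matrix ι ι ℝ) (M.map _) ▸ PosSemidef.zero
  obtain ⟨i₀⟩ := ‹Nonempty ι›
  classical
  have hK := (hM.posSemidef_add_sub hsymm (hdiag i₀)).map_exp_s9
  have : M.map (fun u => exp (-u)) = (diagonal fun i => exp (-M i i₀))ᴴ *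
      (of fun i j => M i i₀ + M j i₀ - M i j).map exp * diagonal fun i => exp (-M i i₀) := by
    ext i j
    simp only [map_apply, conjTranspose_eq_transpose_of_trivial, diagonal_transpose, mul_diagonal,
      diagonal_mul, of_apply, ← exp_add, exp_eq_exp]
    ring
  exact this ▸ hK.conjTranspose_mul_mul_same _

theorem IsNegType.map_one_sub_exp_neg {M : Matrix ι ι ℝ} (hM : M.IsNegType) (hsymm : M.IsSymm)
    (hdiag : ∀ i, M i i = 0) : (M.map fun u => 1 - exp (-u)).IsNegType := fun a ha => by
  have hone : ∑ i, ∑ j, a i * a j = 0 := by rw [← sum_mul_sum, ha, zero_mul]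
  have := (hM.posSemidef_map_exp_neg hsymm hdiag).sum_sum_nonneg a
  simp only [map_apply, mul_sub, mul_one, sum_sub_distrib, hone] at this ⊢
  linarith

theorem IsNegType.map_rpow {M : Matrix ι ι ℝ} (hM : M.IsNegType) (hsymm : M.IsSymm)
    (hdiag : ∀ i, M i i = 0) (hnonneg : ∀ i j, 0 ≤ M i j) {θ : ℝ} (hθ : 0 < θ) (hθ1 : θ ≤ 1) :
    (M.map (· ^ θ)).IsNegType := by
  rcases hθ1.eq_or_lt with rfl | hθ1
  · simpa using hM
  intro a ha
  have hint (i j : ι) := (integrableOn_one_sub_exp_mul_rpow hθ hθ1 (hnonneg i j)).const_mul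
    (a i * a j)
  have hrepr : (∑ i, ∑ j, a i * a j * M i j ^ θ) * ∫ l in Ioi 0, (1 - exp (-l)) * l ^ (-1 - θ) =
      ∫ l in Ioi 0, ∑ i, ∑ j, a i * a j * ((1 - exp (-(M i j * l))) * l ^ (-1 - θ)) := by
    rw [integral_finsetSum _ fun i _ => integrable_finsetSum _ fun j _ => hint i j, sum_mul]
    refine sum_congr rfl fun i _ => ?_
    rw [integral_finsetSum _ fun j _ => hint i j, sum_mul]
    refine sum_congr rfl fun j _ => ?_
    rw [integral_const_mul, integral_one_sub_exp_mul_rpow hθ (hnonneg i j), mul_assoc]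
  have hpt : ∀ l ∈ Ioi (0 : ℝ),
      ∑ i, ∑ j, a i * a j * ((1 - exp (-(M i j * l))) * l ^ (-1 - θ)) ≤ 0 := fun l hl => by
    have := (hM.smul hl.out.le).map_one_sub_exp_neg (hsymm.smul l) (by simp [hdiag]) a ha
    simp only [← mul_assoc, ← sum_mul]
    refine mul_nonpos_of_nonpos_of_nonneg ?_ (rpow_nonneg hl.out.le _)
    simpa [mul_comm l] using this
  exact nonpos_of_mul_nonpos_left (hrepr ▸ setIntegral_nonpos measurableSet_Ioi hpt)
    (integral_one_sub_exp_rpow_pos hθ hθ1)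

theorem isNegType_sub_sq (s : ι → ℝ) : (of fun i j => (s i - s j) ^ 2).IsNegType := fun a ha => by
  have : ∑ i, ∑ j, a i * a j * (of fun i j => (s i - s j) ^ 2) i j =
      -(2 * ∑ i, ∑ j, a i * s i * (a j * s j)) := by
    simp only [of_apply, sub_sq, mul_add, mul_sub, sum_add_distrib, sum_sub_distrib]
    simp only [mul_assoc, ← mul_sum, ← sum_mul, ha]
    simp only [zero_mul, mul_zero, sum_const_zero, zero_sub, add_zero, mul_sum,
      ← sum_neg_distrib]
    exact sum_congr rfl fun i _ => sum_congr rfl fun j _ => by ring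
  rw [this, ← sum_mul_sum]
  linarith [mul_self_nonneg (∑ i, a i * s i)]

theorem isNegType_abs_sub_rpow (s : ι → ℝ) {p : ℝ} (hp : 0 < p) (hp2 : p ≤ 2) :
    (of fun i j => |s i - s j| ^ p).IsNegType := by
  have : (of fun i j => |s i - s j| ^ p) = (of fun i j => (s i - s j) ^ 2).map (· ^ (p / 2)) := by
    ext i j
    rw [map_apply, of_apply, of_apply, ← sq_abs, ← rpow_natCast, ← rpow_mul (abs_nonneg _)]
    ring_nf
  rw [this]
  refine (isNegType_sub_sq s).map_rpow ?_ (fun i => by simp) (fun i j => sq_nonneg _)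
    (by positivity) (by linarith)
  exact IsSymm.ext fun i j => by simp only [of_apply]; ring

theorem isNegType_tsum {κ : Type*} {M : κ → Matrix ι ι ℝ} (hM : ∀ t, (M t).IsNegType)
    (hs : ∀ i j, Summable fun t => M t i j) : (of fun i j => ∑' t, M t i j).IsNegType :=
  fun a ha => HasSum.nonpos (fun t => hM t a ha) <|
    hasSum_sum fun i _ => hasSum_sum fun j _ => (hs i j).hasSum.mul_left (a i * a j)

end Matrix

theorem lp_norm_pow_negtype_general (p q : ℝ) (hq : 0 < q) (hqp : q ≤ p) (hp2 : p ≤ 2)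
    (n : ℕ) (x : Fin n → ℕ → ℝ)
    (hx : ∀ i, Summable (fun t => |x i t| ^ p))
    (a : Fin n → ℝ) (ha : (∑ i, a i) = 0) :
    ∑ i, ∑ j, a i * a j * ((∑' t, |x i t - x j t| ^ p) ^ (1 / p)) ^ q ≤ 0 := by
  have hp : 0 < p := hq.trans_le hqp
  set N : Matrix (Fin n) (Fin n) ℝ := of fun i j => ∑' t, |x i t - x j t| ^ p
  have hN : N.IsNegType := isNegType_tsum (fun t => isNegType_abs_sub_rpow (x · t) hp hp2)
    fun i j => summable_abs_sub_rpow hp (hx i) (hx j)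
  have hsymm : N.IsSymm := IsSymm.ext fun i j => by simp only [N, of_apply, abs_sub_comm]
  have hnonneg (i j) : 0 ≤ N i j := tsum_nonneg fun t => by positivity
  have := hN.map_rpow hsymm (fun i => by simp [N, zero_rpow hp.ne']) hnonneg (div_pos hq hp)
    ((div_le_one hp).2 hqp) a ha
  convert this using 4 with i _ j _
  show (N i j ^ (1 / p)) ^ q = N i j ^ (q / p)
  rw [← rpow_mul (hnonneg i j), one_div_mul_eq_div]

/-- For `0 < q ≤ p ≤ 2`, the function `ρ(x,y) = ‖x − y‖_p^q` is a
semi-metric of negative type on `ℓ^p`. -/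
theorem lp_norm_pow_negtype (p q : ℝ) (hq : 0 < q) (hqp : q ≤ p) (hp2 : p ≤ 2)
    (n : ℕ) (hn : 2 ≤ n) (x : Fin n → ℕ → ℝ)
    (hx : ∀ i, Summable (fun t => |x i t| ^ p))
    (a : Fin n → ℝ) (ha : (∑ i, a i) = 0) :
    ∑ i, ∑ j, a i * a j * ((∑' t, |x i t - x j t| ^ p) ^ (1 / p)) ^ q ≤ 0 :=
  lp_norm_pow_negtype_general p q hq hqp hp2 n x hx a ha
end
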